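/- (Lemma 3) Let A ∈ ℝ^{n×n}, B ∈ ℝ^{n×p}, let u : ℝ → ℝ^p be a function, and let x : ℝ → ℝ^n be differentiable with ẋ(t) = A x(t) + B u(t) for all t ∈ ℝ. Set x^{[2]}(t) := D_nᵀ (x(t) ⊗ x(t)), Ā := D_nᵀ (A ⊕ A) (D_n⁺)ᵀ, and Ū(t) := D_nᵀ ((B u(t)) ⊗ I_n + I_n ⊗ (B u(t))). Then x^{[2]} is differentiable and, for every t, d/dt x^{[2]}(t) = Ā x^{[2]}(t) + Ū(t) x(t). -/

import Mathlib

open Matrix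
open scoped Kronecker

namespace Quad

/-- Index set for the lower-triangular entries (pairs `(i,j)` with `j ≤ i`). -/
abbrev SymIdx (n : ℕ) := {p : Fin n × Fin n // p.2 ≤ p.1}

/-- Vectorization of a matrix (stacking columns): `vec M (j, i) = M i j`. -/
def vec {n m : ℕ} (M : Matrix (Fin n) (Fin m) ℝ) : Fin m × Fin n → ℝ :=
  fun p => M p.2 p.1

/-- Half-vectorization of a (symmetric) matrix. -/
def vech {n : ℕ} (M : Matrix (Fin n) (Fin n) ℝ) : SymIdx n → ℝ :=
  fun p => M p.1.1 p.1.2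

/-- The duplication matrix `D_n`. -/
def dup (n : ℕ) : Matrix (Fin n × Fin n) (SymIdx n) ℝ :=
  Matrix.of fun r c => if r = c.1 ∨ r = (c.1.2, c.1.1) then 1 else 0

/-- The Moore–Penrose inverse `D_n⁺ = (D_nᵀ D_n)⁻¹ D_nᵀ`. -/
noncomputable def dupPinv (n : ℕ) : Matrix (SymIdx n) (Fin n × Fin n) ℝ :=
  ((dup n)ᵀ * dup n)⁻¹ * (dup n)ᵀ

/-- Kronecker sum `A ⊕ B = A ⊗ I + I ⊗ B`. -/
def kronSum {n m : ℕ} (A : Matrix (Fin n) (Fin n) ℝ) (B : Matrix (Fin m) (Fin m) ℝ) :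
    Matrix (Fin n × Fin m) (Fin n × Fin m) ℝ :=
  A ⊗ₖ (1 : Matrix (Fin m) (Fin m) ℝ) + (1 : Matrix (Fin n) (Fin n) ℝ) ⊗ₖ B

/-- Kronecker product of two (column) vectors. -/
def kronVec {a b : ℕ} (u : Fin a → ℝ) (v : Fin b → ℝ) : Fin a × Fin b → ℝ :=
  fun p => u p.1 * v p.2

/-- The Lyapunov operator `L_A(X) = X A + Aᵀ X`. -/
def lyap {n : ℕ} (A X : Matrix (Fin n) (Fin n) ℝ) : Matrix (Fin n) (Fin n) ℝ :=
  X * A + Aᵀ * X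

/-- `w ⊗ I_n` for a column vector `w ∈ ℝⁿ`, an `n² × n` matrix. -/
def vecKronId {n : ℕ} (w : Fin n → ℝ) : Matrix (Fin n × Fin n) (Fin n) ℝ :=
  Matrix.of fun pr j => w pr.1 * (if pr.2 = j then 1 else 0)

/-- `I_n ⊗ w` for a column vector `w ∈ ℝⁿ`, an `n² × n` matrix. -/
def idKronVec {n : ℕ} (w : Fin n → ℝ) : Matrix (Fin n × Fin n) (Fin n) ℝ :=
  Matrix.of fun pr j => (if pr.1 = j then 1 else 0) * w pr.2

/-- `Ā := D_nᵀ (A ⊕ A) (D_n⁺)ᵀ`. -/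
noncomputable def kronAbar {n : ℕ} (A : Matrix (Fin n) (Fin n) ℝ) :
    Matrix (SymIdx n) (SymIdx n) ℝ :=
  (dup n)ᵀ * kronSum A A * (dupPinv n)ᵀ

/-- `P` is a permutation matrix. -/
def IsPermMatrix {s : ℕ} (P : Matrix (Fin s) (Fin s) ℝ) : Prop :=
  ∃ σ : Equiv.Perm (Fin s), ∀ i j, P i j = if i = σ j then 1 else 0

/-- Identification of `Fin b ⊕ Fin (a - b)` with `Fin a` used for vertical stacking. -/
def stackEquiv {a b : ℕ} (h : b ≤ a) : Fin b ⊕ Fin (a - b) ≃ Fin a :=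
  finSumFinEquiv.trans (finCongr (Nat.add_sub_cancel' h))

/-! Differentiating `x^{[2]} = D_nᵀ (x ⊗ x)` gives `D_nᵀ (ẋ ⊗ x + x ⊗ ẋ)`, and substituting
`ẋ = A x + B u` splits this into `D_nᵀ (A ⊕ A) (x ⊗ x) + Ū x`. Since `x ⊗ x` is symmetric it lies
in the range of `D_n`, on which `(D_n⁺)ᵀ D_nᵀ` is the identity; hence `D_nᵀ (A ⊕ A) (x ⊗ x) = Ā x^{[2]}`.
That `D_n⁺` is a genuine left inverse rests on `D_nᵀ D_n` being invertible, i.e. on `D_n` being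
injective: `(D_n y)(i, j)` is the entry of `y` at the sorted pair. -/

def sortIdx {n : ℕ} (r : Fin n × Fin n) : SymIdx n :=
  if h : r.2 ≤ r.1 then ⟨r, h⟩ else ⟨(r.2, r.1), le_of_not_ge h⟩

lemma sortIdx_eq_iff {n : ℕ} {r : Fin n × Fin n} {c : SymIdx n} :
    sortIdx r = c ↔ r = c.1 ∨ r = (c.1.2, c.1.1) := by
  obtain ⟨⟨i, j⟩, hij⟩ := c
  obtain ⟨k, l⟩ := r
  simp only [Fin.le_def] at hij
  unfold sortIdx
  split_ifs with h <;> simp only [Fin.le_def] at h <;>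
    simp only [Subtype.ext_iff, Prod.ext_iff, Fin.ext_iff] <;> omega

lemma sortIdx_val {n : ℕ} (c : SymIdx n) : sortIdx c.1 = c :=
  sortIdx_eq_iff.2 (.inl rfl)

lemma sortIdx_val_eq_or_swap {n : ℕ} (r : Fin n × Fin n) :
    (sortIdx r).1 = r ∨ (sortIdx r).1 = r.swap := by
  unfold sortIdx
  split
  exacts [.inl rfl, .inr rfl]

lemma dup_apply {n : ℕ} (r : Fin n × Fin n) (c : SymIdx n) :
    dup n r c = if sortIdx r = c then 1 else 0 := by
  simp only [dup, of_apply, sortIdx_eq_iff]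

lemma dup_mulVec {n : ℕ} (y : SymIdx n → ℝ) (r : Fin n × Fin n) :
    (dup n *ᵥ y) r = y (sortIdx r) := by
  simp [mulVec, dotProduct, dup_apply]

lemma dup_mulVec_injective (n : ℕ) : Function.Injective (dup n).mulVec := fun y z h =>
  funext fun c => by simpa only [dup_mulVec, sortIdx_val] using congrFun h c.1

lemma dup_mulVec_comp_val_of_symm {n : ℕ} {v : Fin n × Fin n → ℝ}
    (hv : ∀ i j, v (i, j) = v (j, i)) : dup n *ᵥ (fun c => v c.1) = v := by
  funext r
  rw [dup_mulVec]
  rcases sortIdx_val_eq_or_swap r with h | h <;> rw [h]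
  exact hv _ _

lemma isUnit_det_dup_transpose_mul_dup (n : ℕ) : IsUnit ((dup n)ᵀ * dup n).det := by
  have hunit := (PosDef.conjTranspose_mul_self (dup n) (dup_mulVec_injective n)).isUnit
  rwa [conjTranspose_eq_transpose_of_trivial, isUnit_iff_isUnit_det] at hunit

lemma pinv_transpose_mul_transpose_mul_self {m k R : Type*} [Fintype m] [Fintype k]
    [DecidableEq k] [CommRing R] (M : Matrix m k R) (h : IsUnit (Mᵀ * M).det) :
    ((Mᵀ * M)⁻¹ * Mᵀ)ᵀ * Mᵀ * M = M := by
  rw [transpose_mul, transpose_transpose, transpose_nonsing_inv, transpose_mul,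
    transpose_transpose, Matrix.mul_assoc, Matrix.mul_assoc, nonsing_inv_mul _ h, Matrix.mul_one]

lemma dupPinv_transpose_mulVec_dup_transpose_mulVec {n : ℕ} {v : Fin n × Fin n → ℝ}
    (hv : ∀ i j, v (i, j) = v (j, i)) : (dupPinv n)ᵀ *ᵥ ((dup n)ᵀ *ᵥ v) = v := by
  obtain ⟨y, rfl⟩ : ∃ y, dup n *ᵥ y = v := ⟨_, dup_mulVec_comp_val_of_symm hv⟩
  rw [mulVec_mulVec, mulVec_mulVec, dupPinv,
    pinv_transpose_mul_transpose_mul_self _ (isUnit_det_dup_transpose_mul_dup n)]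

lemma kronVec_add_left {a b : ℕ} (u u' : Fin a → ℝ) (v : Fin b → ℝ) :
    kronVec (u + u') v = kronVec u v + kronVec u' v :=
  funext fun _ => add_mul _ _ _

lemma kronVec_add_right {a b : ℕ} (u : Fin a → ℝ) (v v' : Fin b → ℝ) :
    kronVec u (v + v') = kronVec u v + kronVec u v' :=
  funext fun _ => mul_add _ _ _

lemma kronecker_mulVec_kronVec {m k a b : ℕ} (A : Matrix (Fin m) (Fin a) ℝ)
    (B : Matrix (Fin k) (Fin b) ℝ) (u : Fin a → ℝ) (v : Fin b → ℝ) :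
    (A ⊗ₖ B) *ᵥ kronVec u v = kronVec (A *ᵥ u) (B *ᵥ v) := by
  funext ⟨i, j⟩
  simp only [mulVec, dotProduct, kroneckerMap_apply, kronVec, Fintype.sum_prod_type,
    Finset.sum_mul_sum]
  exact Finset.sum_congr rfl fun _ _ => Finset.sum_congr rfl fun _ _ => by ring

lemma kronSum_mulVec_kronVec {n : ℕ} (A : Matrix (Fin n) (Fin n) ℝ) (u v : Fin n → ℝ) :
    kronSum A A *ᵥ kronVec u v = kronVec (A *ᵥ u) v + kronVec u (A *ᵥ v) := by
  rw [kronSum, add_mulVec, kronecker_mulVec_kronVec, kronecker_mulVec_kronVec, one_mulVec,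
    one_mulVec]

lemma vecKronId_mulVec {n : ℕ} (w y : Fin n → ℝ) : vecKronId w *ᵥ y = kronVec w y := by
  funext ⟨i, j⟩
  simp [vecKronId, mulVec, dotProduct, kronVec]

lemma idKronVec_mulVec {n : ℕ} (w y : Fin n → ℝ) : idKronVec w *ᵥ y = kronVec y w := by
  funext ⟨i, j⟩
  simp [idKronVec, mulVec, dotProduct, kronVec, mul_comm]

lemma kronAbar_mulVec_dup_transpose_mulVec_kronVec {n : ℕ} (A : Matrix (Fin n) (Fin n) ℝ)
    (y : Fin n → ℝ) :
    kronAbar A *ᵥ ((dup n)ᵀ *ᵥ kronVec y y) =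
      (dup n)ᵀ *ᵥ (kronVec (A *ᵥ y) y + kronVec y (A *ᵥ y)) := by
  rw [kronAbar, ← mulVec_mulVec, ← mulVec_mulVec,
    dupPinv_transpose_mulVec_dup_transpose_mulVec fun i j => mul_comm (y i) (y j),
    kronSum_mulVec_kronVec]

lemma hasDerivAt_kronVec {a b : ℕ} {f : ℝ → Fin a → ℝ} {g : ℝ → Fin b → ℝ}
    {f' : Fin a → ℝ} {g' : Fin b → ℝ} {t : ℝ} (hf : HasDerivAt f f' t)
    (hg : HasDerivAt g g' t) :
    HasDerivAt (fun s => kronVec (f s) (g s)) (kronVec f' (g t) + kronVec (f t) g') t :=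
  hasDerivAt_pi.2 fun r => (hasDerivAt_pi.1 hf r.1).mul (hasDerivAt_pi.1 hg r.2)

lemma hasDerivAt_mulVec {𝕜 m k : Type*} [NontriviallyNormedField 𝕜] [CompleteSpace 𝕜]
    [Fintype m] [Fintype k] (M : Matrix m k 𝕜) {f : 𝕜 → k → 𝕜} {f' : k → 𝕜} {t : 𝕜}
    (hf : HasDerivAt f f' t) : HasDerivAt (fun s => M *ᵥ f s) (M *ᵥ f') t :=
  (LinearMap.toContinuousLinearMap M.mulVecLin).hasFDerivAt.comp_hasDerivAt t hf

/-- Lemma 3: with `x^{[2]} := D_nᵀ (x ⊗ x)`,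
`Ā := D_nᵀ (A ⊕ A)(D_n⁺)ᵀ` and `Ū := D_nᵀ((Bu) ⊗ I_n + I_n ⊗ (Bu))`, along
`ẋ = Ax + Bu` one has `d/dt x^{[2]} = Ā x^{[2]} + Ū x`. -/
theorem hasDerivAt_xsq {n p : ℕ}
    (A : Matrix (Fin n) (Fin n) ℝ) (B : Matrix (Fin n) (Fin p) ℝ)
    (u : ℝ → Fin p → ℝ) (x : ℝ → Fin n → ℝ)
    (hx : ∀ t, HasDerivAt x (A.mulVec (x t) + B.mulVec (u t)) t)
    (xsq : ℝ → SymIdx n → ℝ)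
    (hxsq : ∀ t, xsq t = (dup n)ᵀ.mulVec (kronVec (x t) (x t)))
    (Ubar : ℝ → Matrix (SymIdx n) (Fin n) ℝ)
    (hUbar : ∀ t, Ubar t =
      (dup n)ᵀ * (vecKronId (B.mulVec (u t)) + idKronVec (B.mulVec (u t)))) :
    ∀ t : ℝ, HasDerivAt xsq
      ((kronAbar A).mulVec (xsq t) + (Ubar t).mulVec (x t)) t := by
  intro t
  have hderiv := hasDerivAt_mulVec (dup n)ᵀ (hasDerivAt_kronVec (hx t) (hx t))
  rw [← funext hxsq] at hderiv
  convert hderiv using 1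
  rw [hxsq, hUbar, kronAbar_mulVec_dup_transpose_mulVec_kronVec, ← mulVec_mulVec, add_mulVec,
    vecKronId_mulVec, idKronVec_mulVec, ← mulVec_add, kronVec_add_left,
    kronVec_add_right, add_add_add_comm]

end Quad
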